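/- Let s₁ > 0. For a finitely supported function f : ℤ → ℝ (whose value at 0 is irrelevant) and λ > 0 define E_λ(f) = λ·∑_{x∈ℤ, x≠0} f(x)² + (1/2)·∑_{x,y∈ℤ∖{0}, |x−y|=1} s₁·(f(y) − f(x))² + (f(1) − f(−1))², and define f_ext : ℤ → ℝ by f_ext(x) = f(x) for x ≠ 0 and f_ext(0) = (1/2)·(f(1) + f(−1)), together with Ē_λ(f_ext) = λ·∑_{x∈ℤ} f_ext(x)² + (1/2)·∑_{x,y∈ℤ, |x−y|=1} (f_ext(y) − f_ext(x))². Then there exists a constant C = C(s₁) ≥ 1 such that for every λ > 0 and every finitely supported f : ℤ → ℝ, C⁻¹·E_λ(f) ≤ Ē_λ(f_ext) ≤ C·E_λ(f). -/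
import Mathlib


/-- The `H₁`-energy `E_λ(f)` on `ℤ ∖ {0}` with rate `s₁`, augmented by the
symmetric exchange term across the bond `(-1, 1)`. -/
noncomputable def EpunctOne (s₁ lam : ℝ) (f : ℤ → ℝ) : ℝ :=
  lam * ∑ᶠ x : ℤ, (if x ≠ 0 then (f x) ^ 2 else 0) +
    (1 / 2) * ∑ᶠ x : ℤ, ∑ z ∈ ({1, -1} : Finset ℤ),
      (if x ≠ 0 ∧ x + z ≠ 0 then s₁ * (f (x + z) - f x) ^ 2 else 0) +
    (f 1 - f (-1)) ^ 2

/-- The extended `H₁`-energy `Ē_λ(g)` on all of `ℤ` with unit rates. -/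
noncomputable def EfullOne (lam : ℝ) (g : ℤ → ℝ) : ℝ :=
  lam * ∑ᶠ x : ℤ, (g x) ^ 2 +
    (1 / 2) * ∑ᶠ x : ℤ, ∑ z ∈ ({1, -1} : Finset ℤ), (g (x + z) - g x) ^ 2

/-- The extension `f_ext` filling in the value at the origin by the average of
the two neighboring values. -/
noncomputable def fextOne (f : ℤ → ℝ) : ℤ → ℝ := fun x =>
  if x = 0 then (f 1 + f (-1)) / 2 else f x

theorem stmt_5 (s₁ : ℝ) (hs₁ : 0 < s₁) :
    ∃ C : ℝ, 1 ≤ C ∧ ∀ lam : ℝ, 0 < lam →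
      ∀ f : ℤ → ℝ, (Function.support f).Finite →
        C⁻¹ * EpunctOne s₁ lam f ≤ EfullOne lam (fextOne f) ∧
          EfullOne lam (fextOne f) ≤ C * EpunctOne s₁ lam f := by
  classical
  refine ⟨max 2 (max s₁ s₁⁻¹), le_trans (by norm_num) (le_max_left _ _), ?_⟩
  set C := max 2 (max s₁ s₁⁻¹) with hCdef
  have hC2 : (2:ℝ) ≤ C := le_max_left _ _
  have hCs : s₁ ≤ C := le_trans (le_max_left _ _) (le_max_right _ _)
  have hCsi : s₁⁻¹ ≤ C := le_trans (le_max_right _ _) (le_max_right _ _)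
  have hC0 : (0:ℝ) < C := by linarith
  have hCs1 : (1:ℝ) ≤ C * s₁ := by
    have := mul_le_mul_of_nonneg_right hCsi hs₁.le
    rwa [inv_mul_cancel₀ hs₁.ne'] at this
  intro lam hlam f hf
  set g := fextOne f with hg
  have hgx : ∀ x : ℤ, x ≠ 0 → g x = f x := by
    intro x hx; simp [hg, fextOne, hx]
  have hg0 : g 0 = (f 1 + f (-1)) / 2 := by simp [hg, fextOne]
  set T : Finset ℤ := hf.toFinset ∪ hf.toFinset.image (· + 1) ∪
      hf.toFinset.image (· + (-1)) ∪ ({1, -1, 0} : Finset ℤ) with hTdef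
  have h0T : (0:ℤ) ∈ T := by simp [hTdef]
  have h1T : (1:ℤ) ∈ T := by simp [hTdef]
  have hm1T : (-1:ℤ) ∈ T := by simp [hTdef]
  have memT : ∀ x : ℤ, f x ≠ 0 ∨ f (x + 1) ≠ 0 ∨ f (x + -1) ≠ 0 ∨ x = 1 ∨ x = -1 ∨ x = 0 →
      x ∈ T := by
    intro x hx
    simp only [hTdef, Finset.mem_union, Finset.mem_image, Set.Finite.mem_toFinset,
      Function.mem_support, Finset.mem_insert, Finset.mem_singleton]
    rcases hx with h | h | h | h | h | h
    · exact Or.inl (Or.inl (Or.inl h))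
    · exact Or.inl (Or.inr ⟨x + 1, h, by ring⟩)
    · exact Or.inl (Or.inl (Or.inr ⟨x + -1, h, by ring⟩))
    · exact Or.inr (Or.inl h)
    · exact Or.inr (Or.inr (Or.inl h))
    · exact Or.inr (Or.inr (Or.inr h))
  -- abbreviations
  set B := (f 1 - f (-1)) ^ 2 with hB
  set q := ((f 1 + f (-1)) / 2) ^ 2 with hq
  set P := ∑ x ∈ T, (if x ≠ 0 then (f x) ^ 2 else 0) with hP
  set K := ∑ x ∈ T, ((if x ≠ 0 ∧ x + 1 ≠ 0 then (f (x + 1) - f x) ^ 2 else 0)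
      + (if x ≠ 0 ∧ x + -1 ≠ 0 then (f (x + -1) - f x) ^ 2 else 0)) with hK
  have hpair : ((1:ℤ) ≠ -1) := by decide
  -- convert the four finsums to sums over T
  have e1 : ∑ᶠ x : ℤ, (if x ≠ 0 then (f x) ^ 2 else 0) = P := by
    rw [hP]
    apply finsum_eq_sum_of_support_subset
    intro x hx
    rw [Function.mem_support] at hx
    apply memT x
    by_contra hc
    push_neg at hc
    exact hx (by simp [hc.1])
  have e2 : ∑ᶠ x : ℤ, ∑ z ∈ ({1, -1} : Finset ℤ),
      (if x ≠ 0 ∧ x + z ≠ 0 then s₁ * (f (x + z) - f x) ^ 2 else 0) = s₁ * K := by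
    have hb : ∀ x : ℤ, (∑ z ∈ ({1, -1} : Finset ℤ),
        (if x ≠ 0 ∧ x + z ≠ 0 then s₁ * (f (x + z) - f x) ^ 2 else 0)) =
        s₁ * ((if x ≠ 0 ∧ x + 1 ≠ 0 then (f (x + 1) - f x) ^ 2 else 0)
          + (if x ≠ 0 ∧ x + -1 ≠ 0 then (f (x + -1) - f x) ^ 2 else 0)) := by
      intro x
      rw [Finset.sum_pair hpair, mul_add]
      congr 1 <;> (split_ifs <;> simp)
    rw [finsum_congr hb]
    have heq : ∑ᶠ x : ℤ, s₁ * ((if x ≠ 0 ∧ x + 1 ≠ 0 then (f (x + 1) - f x) ^ 2 else 0)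
        + (if x ≠ 0 ∧ x + -1 ≠ 0 then (f (x + -1) - f x) ^ 2 else 0)) =
        ∑ x ∈ T, s₁ * ((if x ≠ 0 ∧ x + 1 ≠ 0 then (f (x + 1) - f x) ^ 2 else 0)
        + (if x ≠ 0 ∧ x + -1 ≠ 0 then (f (x + -1) - f x) ^ 2 else 0)) := by
      apply finsum_eq_sum_of_support_subset
      intro x hx
      rw [Function.mem_support] at hx
      apply memT x
      by_contra hc
      push_neg at hc
      exact hx (by simp [hc.1, hc.2.1, hc.2.2.1])
    rw [heq, hK, Finset.mul_sum]
  have e3 : ∑ᶠ x : ℤ, (g x) ^ 2 = P + q := by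
    have : ∑ᶠ x : ℤ, (g x) ^ 2 = ∑ x ∈ T, (g x) ^ 2 := by
      apply finsum_eq_sum_of_support_subset
      intro x hx
      rw [Function.mem_support] at hx
      apply memT x
      by_contra hc
      push_neg at hc
      exact hx (by rw [hgx x hc.2.2.2.2.2]; simp [hc.1])
    rw [this]
    have hterm : ∀ x ∈ T, (g x) ^ 2 =
        (if x ≠ 0 then (f x) ^ 2 else 0) + (if x = 0 then q else 0) := by
      intro x _
      by_cases h : x = 0
      · subst h; simp [hg0, hq]
      · simp [h, hgx x h]
    rw [Finset.sum_congr rfl hterm, Finset.sum_add_distrib, Finset.sum_ite_eq' T 0 fun _ => q,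
      if_pos h0T, hP]
  have e4 : ∑ᶠ x : ℤ, ∑ z ∈ ({1, -1} : Finset ℤ), (g (x + z) - g x) ^ 2 = K + B := by
    have hb : ∀ x : ℤ, (∑ z ∈ ({1, -1} : Finset ℤ), (g (x + z) - g x) ^ 2) =
        (g (x + 1) - g x) ^ 2 + (g (x + -1) - g x) ^ 2 := fun x => Finset.sum_pair hpair
    rw [finsum_congr hb]
    have : ∑ᶠ x : ℤ, ((g (x + 1) - g x) ^ 2 + (g (x + -1) - g x) ^ 2) =
        ∑ x ∈ T, ((g (x + 1) - g x) ^ 2 + (g (x + -1) - g x) ^ 2) := by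
      apply finsum_eq_sum_of_support_subset
      intro x hx
      rw [Function.mem_support] at hx
      apply memT x
      by_contra hc
      push_neg at hc
      obtain ⟨hfx, hfx1, hfxm1, hx1, hxm1, hx0⟩ := hc
      have e1 : g x = 0 := by rw [hgx x hx0, hfx]
      have e2 : g (x + 1) = 0 := by
        rw [hgx (x + 1) (by omega), hfx1]
      have e3 : g (x + -1) = 0 := by
        rw [hgx (x + -1) (by omega), hfxm1]
      exact hx (by rw [e1, e2, e3]; ring)
    rw [this]
    have hterm : ∀ x ∈ T, ((g (x + 1) - g x) ^ 2 + (g (x + -1) - g x) ^ 2) =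
        ((if x ≠ 0 ∧ x + 1 ≠ 0 then (f (x + 1) - f x) ^ 2 else 0)
          + (if x ≠ 0 ∧ x + -1 ≠ 0 then (f (x + -1) - f x) ^ 2 else 0))
        + ((if x = 0 then B / 2 else 0) + (if x = 1 then B / 4 else 0)
          + (if x = -1 then B / 4 else 0)) := by
      intro x _
      by_cases h0 : x = 0
      · subst h0
        rw [show (0:ℤ) + 1 = 1 by ring, show (0:ℤ) + -1 = -1 by ring,
          hgx 1 (by decide), hgx (-1) (by decide), hg0]
        norm_num [hB]
        ring
      · by_cases h1 : x = 1
        · subst h1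
          rw [show (1:ℤ) + -1 = 0 by ring, show (1:ℤ) + 1 = 2 by ring,
            hgx 2 (by decide), hgx 1 (by decide), hg0]
          norm_num [hB]
          ring
        · by_cases hm1 : x = -1
          · subst hm1
            rw [show (-1:ℤ) + 1 = 0 by ring, show (-1:ℤ) + -1 = -2 by ring,
              hgx (-2) (by decide), hgx (-1) (by decide), hg0]
            norm_num [hB]
            ring
          · rw [hgx x h0, hgx (x + 1) (by omega), hgx (x + -1) (by omega),
              if_pos ⟨h0, by omega⟩, if_pos ⟨h0, by omega⟩, if_neg h0, if_neg h1, if_neg hm1]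
            ring
    rw [Finset.sum_congr rfl hterm, Finset.sum_add_distrib, hK]
    congr 1
    rw [Finset.sum_add_distrib, Finset.sum_add_distrib,
      Finset.sum_ite_eq' T 0 fun _ => B / 2, Finset.sum_ite_eq' T 1 fun _ => B / 4,
      Finset.sum_ite_eq' T (-1) fun _ => B / 4, if_pos h0T, if_pos h1T, if_pos hm1T]
    ring
  -- energies in closed form
  have Epunct : EpunctOne s₁ lam f = lam * P + (1 / 2) * (s₁ * K) + B := by
    rw [EpunctOne, e1, e2]
  have Efull : EfullOne lam g = lam * (P + q) + (1 / 2) * (K + B) := by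
    rw [EfullOne, e3, e4]
  -- nonnegativity and basic bounds
  have hPnn : 0 ≤ P := by
    rw [hP]; apply Finset.sum_nonneg; intro x _; split_ifs <;> positivity
  have hKnn : 0 ≤ K := by
    rw [hK]; apply Finset.sum_nonneg; intro x _
    have : (0:ℝ) ≤ (if x ≠ 0 ∧ x + 1 ≠ 0 then (f (x + 1) - f x) ^ 2 else 0) := by
      split_ifs <;> positivity
    have h2 : (0:ℝ) ≤ (if x ≠ 0 ∧ x + -1 ≠ 0 then (f (x + -1) - f x) ^ 2 else 0) := by
      split_ifs <;> positivity
    linarith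
  have hBnn : 0 ≤ B := by rw [hB]; positivity
  have hqnn : 0 ≤ q := by rw [hq]; positivity
  have hqP : q ≤ P := by
    have hsub : ({1, -1} : Finset ℤ) ⊆ T := by
      intro x hx
      simp only [Finset.mem_insert, Finset.mem_singleton] at hx
      rcases hx with h | h
      · exact h ▸ h1T
      · exact h ▸ hm1T
    have hle : ∑ x ∈ ({1, -1} : Finset ℤ), (if x ≠ 0 then (f x) ^ 2 else 0) ≤ P := by
      rw [hP]
      apply Finset.sum_le_sum_of_subset_of_nonneg hsub
      intro x _ _; split_ifs <;> positivity
    rw [Finset.sum_pair hpair] at hle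
    norm_num at hle
    rw [hq]
    nlinarith [sq_nonneg (f 1 - f (-1))]
  constructor
  · rw [inv_mul_le_iff₀ hC0, Epunct, Efull]
    linarith [mul_nonneg (mul_nonneg (sub_nonneg.2 (le_trans one_le_two hC2)) hlam.le) hPnn,
      mul_nonneg (sub_nonneg.2 hCs) hKnn, mul_nonneg (sub_nonneg.2 hC2) hBnn,
      mul_nonneg (mul_nonneg hC0.le hlam.le) hqnn]
  · rw [Epunct, Efull]
    linarith [mul_nonneg (sub_nonneg.2 hCs1) hKnn,
      mul_nonneg (mul_nonneg (sub_nonneg.2 hC2) hlam.le) hPnn,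
      mul_le_mul_of_nonneg_left hqP hlam.le, mul_nonneg (sub_nonneg.2 hC2) hBnn]
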